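/- arXiv:1811.12337 — 5 statements merged into one kernel-verified Lean document; each statement's English description precedes it below -/
import Mathlib

section
/- Suppose the scatter fixed-point equation N·Ψ = ∑_{n=1}^N w_n x̃_n x̃_nᵀ holds. Then ∑_{n=1}^N w_n = N, i.e., the weights of the maximum likelihood scatter estimator of the multivariate t_ν distribution sum to the sample size. -/
/-!
Multiplying the fixed-point equation by `Ψ⁻¹` and taking traces gives `N r = ∑ wₙ δₙ`.
Since `wₙ (ν + δₙ) = ν + r`, the right-hand side equals `N (ν + r) - ν ∑ wₙ`, and `ν ≠ 0`
yields `∑ wₙ = N`.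
-/

open Matrix

theorem card_mul_eq_sum_mul_inv_quadForm_of_smul_eq_sum {ι n K : Type*} [Fintype ι] [Fintype n]
    [DecidableEq n] [Field K] {Ψ : Matrix n n K} (hΨ : IsUnit Ψ.det) {c : K} {w : ι → K}
    {y : ι → n → K}
    (hfix : c • Ψ = ∑ i, w i • vecMulVec (y i) (y i)) :
    c * Fintype.card n = ∑ i, w i * (y i ⬝ᵥ (Ψ⁻¹ *ᵥ y i)) := by
  have htrace := congrArg (fun M => (Ψ⁻¹ * M).trace) hfix
  simp only [Matrix.mul_smul, nonsing_inv_mul Ψ hΨ, trace_smul, trace_one, Matrix.mul_sum,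
    trace_sum, mul_vecMulVec, trace_vecMulVec, smul_eq_mul] at htrace
  simpa only [dotProduct_comm (Ψ⁻¹ *ᵥ _)] using htrace

theorem div_add_mul_self_eq {K : Type*} [Field K] {a ν δ : K} (h : ν + δ ≠ 0) :
    a / (ν + δ) * δ = a - ν * (a / (ν + δ)) := by
  field_simp
  ring

theorem sum_weights_eq_card_general
    (r N : ℕ) (ν : ℝ) (hν : 0 < ν)
    (x : Fin N → Fin r → ℝ) (μ : Fin r → ℝ)
    (Ψ : Matrix (Fin r) (Fin r) ℝ) (hΨ : Ψ.PosDef)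
    (δ : Fin N → ℝ)
    (hδ : ∀ n, δ n = (x n - μ) ⬝ᵥ (Ψ⁻¹ *ᵥ (x n - μ)))
    (w : Fin N → ℝ)
    (hw : ∀ n, w n = (ν + r) / (ν + δ n))
    (hfix : (N : ℝ) • Ψ = ∑ n, w n • vecMulVec (x n - μ) (x n - μ)) :
    ∑ n, w n = (N : ℝ) := by
  have hδ_nonneg (n : Fin N) : 0 ≤ δ n := by
    simpa only [hδ n, star_trivial] using hΨ.inv.posSemidef.dotProduct_mulVec_nonneg (x n - μ)
  have htrace : (N : ℝ) * r = ∑ n, w n * δ n := by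
    simpa only [Fintype.card_fin, ← hδ] using
      card_mul_eq_sum_mul_inv_quadForm_of_smul_eq_sum (isUnit_iff_ne_zero.mpr hΨ.det_pos.ne') hfix
  have hweights : ∑ n, w n * δ n = N * (ν + r) - ν * ∑ n, w n := by
    have hden (n : Fin N) : ν + δ n ≠ 0 := by linarith [hδ_nonneg n]
    simp only [hw, fun n => div_add_mul_self_eq (a := ν + r) (hden n),
      Finset.sum_sub_distrib, Finset.sum_const, Finset.card_univ, Fintype.card_fin, nsmul_eq_mul,
      Finset.mul_sum]
  have hscaled : ν * ∑ n, w n = ν * N := by linarith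
  exact mul_left_cancel₀ hν.ne' hscaled

/-- If the scatter fixed-point equation `N • Ψ = ∑ wₙ x̃ₙ x̃ₙᵀ` holds,
then the weights sum to the sample size: `∑ wₙ = N`. -/
theorem sum_weights_eq_card
    (r N : ℕ) (hr : 1 ≤ r) (hN : 1 ≤ N) (ν : ℝ) (hν : 0 < ν)
    (x : Fin N → Fin r → ℝ) (μ : Fin r → ℝ)
    (Ψ : Matrix (Fin r) (Fin r) ℝ) (hΨ : Ψ.PosDef)
    (δ : Fin N → ℝ)
    (hδ : ∀ n, δ n = (x n - μ) ⬝ᵥ (Ψ⁻¹ *ᵥ (x n - μ)))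
    (w : Fin N → ℝ)
    (hw : ∀ n, w n = (ν + r) / (ν + δ n))
    (hfix : (N : ℝ) • Ψ = ∑ n, w n • vecMulVec (x n - μ) (x n - μ)) :
    ∑ n, w n = (N : ℝ) :=
  sum_weights_eq_card_general r N ν hν x μ Ψ hΨ δ hδ w hw hfix
end

section
/- The derivative at t = 0 of t ↦ L(μ, Ψ + t·H) vanishes for every symmetric r×r real matrix H if and only if N·Ψ = ∑_{n=1}^N w_n x̃_n x̃_nᵀ; i.e., the stationary points of the scatter parameter are exactly the solutions of the weighted sample-scatter fixed-point equation Ψ = (1/N)·∑_{n=1}^N w_n x̃_n x̃_nᵀ. -/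
/-!
Along the line `t ↦ Ψ + t • H`, Jacobi's formula gives `d log det = tr (Ψ⁻¹ H)` and the inverse
moves with velocity `-Ψ⁻¹ H Ψ⁻¹`, so the derivative of `L` at `t = 0` is
`-½ tr (Ψ⁻¹ H Ψ⁻¹ M)` with `M = N Ψ - ∑ₙ wₙ x̃ₙ x̃ₙᵀ`. If `M = 0` this vanishes for every `H`.
Conversely `M` is symmetric, so `H = Ψ M Ψ` is an admissible direction, and then the derivative
is `-½ tr (Mᵀ M)`, which vanishes only for `M = 0`.
-/

open Matrix BigOperators

/-- The essential part of the log-likelihood of `N` observations from the multivariate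
`t_ν` distribution with location `μ` and scatter matrix `Ψ`. -/
noncomputable def tLogLik (r N : ℕ) (ν : ℝ) (x : Fin N → Fin r → ℝ)
    (μ : Fin r → ℝ) (Ψ : Matrix (Fin r) (Fin r) ℝ) : ℝ :=
  -((N : ℝ) / 2) * Real.log Ψ.det
    - ((ν + r) / 2) * ∑ n, Real.log (1 + ((x n - μ) ⬝ᵥ (Ψ⁻¹ *ᵥ (x n - μ))) / ν)

section MatrixCalculus

variable {n : Type*} [Fintype n] [DecidableEq n]

section NontriviallyNormedField

open Polynomial

variable {𝕜 : Type*} [NontriviallyNormedField 𝕜]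

theorem Matrix.hasDerivAt_det_one_add_smul (A : Matrix n n 𝕜) :
    HasDerivAt (fun t : 𝕜 => (1 + t • A).det) A.trace 0 := by
  have h := (det (1 + (X : 𝕜[X]) • A.map C)).hasDerivAt 0
  rw [derivative_det_one_add_X_smul] at h
  refine h.congr_of_eventuallyEq (.of_forall fun t => ?_)
  dsimp only
  rw [← coe_evalRingHom, RingHom.map_det]
  congr 1
  ext i j
  simp [one_apply, mul_comm t, apply_ite (eval t)]

theorem Matrix.hasDerivAt_det_add_smul {A : Matrix n n 𝕜} (hA : IsUnit A.det)
    (H : Matrix n n 𝕜) :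
    HasDerivAt (fun t : 𝕜 => (A + t • H).det) (A.det * (A⁻¹ * H).trace) 0 := by
  refine ((hasDerivAt_det_one_add_smul (A⁻¹ * H)).const_mul A.det).congr_of_eventuallyEq
    (.of_forall fun t => ?_)
  dsimp only
  rw [← det_mul, mul_add, mul_one, mul_smul_comm, mul_nonsing_inv_cancel_left _ _ hA]

omit [DecidableEq n] in
theorem HasDerivAt.dotProduct_mulVec {m : Type*} [Fintype m] {M : 𝕜 → Matrix m n 𝕜}
    {M' : Matrix m n 𝕜} {t : 𝕜} (hM : HasDerivAt M M' t) (v : m → 𝕜) (w : n → 𝕜) :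
    HasDerivAt (fun s => v ⬝ᵥ (M s *ᵥ w)) (v ⬝ᵥ (M' *ᵥ w)) t := by
  have hentry : ∀ i j, HasDerivAt (fun s => M s i j) (M' i j) t :=
    fun i j => hasDerivAt_pi.1 (hasDerivAt_pi.1 hM i) j
  simp only [dotProduct, mulVec]
  exact HasDerivAt.fun_sum fun i _ =>
    (HasDerivAt.fun_sum fun j _ => (hentry i j).mul_const (w j)).const_mul (v i)

end NontriviallyNormedField

section InverseDeriv

-- A norm is needed only to use `hasFDerivAt_ringInverse`; the statement does not depend on it.
attribute [local instance] Matrix.linftyOpNormedAddCommGroup Matrix.linftyOpNormedRing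
  Matrix.linftyOpNormedSpace Matrix.linftyOpNormedAlgebra

theorem Matrix.hasDerivAt_inv_add_smul {𝕜 : Type*} [RCLike 𝕜] {A : Matrix n n 𝕜}
    (hA : IsUnit A) (H : Matrix n n 𝕜) :
    HasDerivAt (fun t : 𝕜 => (A + t • H)⁻¹) (-(A⁻¹ * H * A⁻¹)) 0 := by
  have hline : HasDerivAt (fun t : 𝕜 => A + t • H) H 0 := by
    have h := ((hasDerivAt_id' (0 : 𝕜)).smul_const H).const_add A
    rwa [one_smul] at h
  have h := (hasFDerivAt_ringInverse (𝕜 := 𝕜) hA.unit).comp_hasDerivAt_of_eq 0 hline (by simp)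
  simp only [Function.comp_def, ← nonsing_inv_eq_ringInverse] at h
  exact h.congr_deriv (by simp [coe_units_inv, mul_assoc])

end InverseDeriv

theorem Matrix.hasDerivAt_log_det_add_smul {A : Matrix n n ℝ} (hA : A.det ≠ 0)
    (H : Matrix n n ℝ) :
    HasDerivAt (fun t : ℝ => Real.log (A + t • H).det) (A⁻¹ * H).trace 0 := by
  have h := (hasDerivAt_det_add_smul hA.isUnit H).log (by simpa using hA)
  simpa [hA] using h

theorem Matrix.PosDef.hasDerivAt_log_one_add_dotProduct_inv_mulVec_div {ν : ℝ} (hν : 0 < ν)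
    {Ψ : Matrix n n ℝ} (hΨ : Ψ.PosDef) (H : Matrix n n ℝ) (v : n → ℝ) :
    HasDerivAt (fun t : ℝ => Real.log (1 + v ⬝ᵥ ((Ψ + t • H)⁻¹ *ᵥ v) / ν))
      (-(v ⬝ᵥ ((Ψ⁻¹ * H * Ψ⁻¹) *ᵥ v)) / (ν + v ⬝ᵥ (Ψ⁻¹ *ᵥ v))) 0 := by
  have hquad : 0 ≤ v ⬝ᵥ (Ψ⁻¹ *ᵥ v) := by
    simpa using hΨ.inv.posSemidef.dotProduct_mulVec_nonneg v
  have h := (((hasDerivAt_inv_add_smul hΨ.isUnit H).dotProduct_mulVec v v).div_const ν).const_add 1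
  have h := h.log (by simp only [zero_smul, add_zero]; positivity)
  refine h.congr_deriv ?_
  simp only [zero_smul, add_zero, neg_mulVec, dotProduct_neg]
  field_simp

omit [DecidableEq n] in
theorem Matrix.trace_mul_vecMulVec {R : Type*} [CommSemiring R] (S : Matrix n n R)
    (v w : n → R) : (S * vecMulVec v w).trace = w ⬝ᵥ (S *ᵥ v) := by
  rw [mul_vecMulVec, trace_vecMulVec, dotProduct_comm]

theorem Matrix.IsSymm.eq_zero_of_forall_trace_conj_mul_eq_zero {Ψ M : Matrix n n ℝ}
    (hM : M.IsSymm) (hΨ : IsUnit Ψ.det) (hΨs : Ψ.IsSymm)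
    (h : ∀ H : Matrix n n ℝ, H.IsSymm → (Ψ⁻¹ * H * Ψ⁻¹ * M).trace = 0) : M = 0 := by
  have hΨMΨ : (Ψ * M * Ψ).IsSymm := by
    simp only [IsSymm, transpose_mul, hΨs.eq, hM.eq, mul_assoc]
  have hMM := h _ hΨMΨ
  rw [mul_assoc Ψ, nonsing_inv_mul_cancel_left (A := Ψ) _ hΨ,
    mul_nonsing_inv_cancel_right (A := Ψ) _ hΨ] at hMM
  have hMH : Mᴴ = M := by rw [conjTranspose_eq_transpose_of_trivial, hM.eq]
  rwa [← trace_conjTranspose_mul_self_eq_zero_iff, hMH]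

end MatrixCalculus

noncomputable def tWeight {r : ℕ} (ν : ℝ) (Ψ : Matrix (Fin r) (Fin r) ℝ) (v : Fin r → ℝ) : ℝ :=
  (ν + r) / (ν + v ⬝ᵥ (Ψ⁻¹ *ᵥ v))

noncomputable def tWeightedScatter (r N : ℕ) (ν : ℝ) (x : Fin N → Fin r → ℝ) (μ : Fin r → ℝ)
    (Ψ : Matrix (Fin r) (Fin r) ℝ) : Matrix (Fin r) (Fin r) ℝ :=
  ∑ k, tWeight ν Ψ (x k - μ) • vecMulVec (x k - μ) (x k - μ)

theorem isSymm_tWeightedScatter (r N : ℕ) (ν : ℝ) (x : Fin N → Fin r → ℝ) (μ : Fin r → ℝ)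
    (Ψ : Matrix (Fin r) (Fin r) ℝ) : (tWeightedScatter r N ν x μ Ψ).IsSymm := by
  simp only [tWeightedScatter, IsSymm, transpose_sum, transpose_smul, transpose_vecMulVec]

theorem hasDerivAt_tLogLik_add_smul {r N : ℕ} {ν : ℝ} (hν : 0 < ν) (x : Fin N → Fin r → ℝ)
    (μ : Fin r → ℝ) {Ψ : Matrix (Fin r) (Fin r) ℝ} (hΨ : Ψ.PosDef) (H : Matrix (Fin r) (Fin r) ℝ) :
    HasDerivAt (fun t : ℝ => tLogLik r N ν x μ (Ψ + t • H))
      (-(1 / 2) * (Ψ⁻¹ * H * Ψ⁻¹ * ((N : ℝ) • Ψ - tWeightedScatter r N ν x μ Ψ)).trace) 0 := by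
  have hdet := hasDerivAt_log_det_add_smul hΨ.det_pos.ne' H
  have hsum := HasDerivAt.fun_sum (u := Finset.univ) fun k _ =>
    hΨ.hasDerivAt_log_one_add_dotProduct_inv_mulVec_div hν H (x k - μ)
  refine ((hdet.const_mul (-((N : ℝ) / 2))).sub (hsum.const_mul ((ν + r) / 2))).congr_deriv ?_
  have htrace : (Ψ⁻¹ * H * Ψ⁻¹ * ((N : ℝ) • Ψ - tWeightedScatter r N ν x μ Ψ)).trace =
      N * (Ψ⁻¹ * H).trace - ∑ k, tWeight ν Ψ (x k - μ) *
        ((x k - μ) ⬝ᵥ ((Ψ⁻¹ * H * Ψ⁻¹) *ᵥ (x k - μ))) := by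
    simp [tWeightedScatter, mul_sub, Matrix.mul_sum, trace_sum, trace_mul_vecMulVec,
      nonsing_inv_mul_cancel_right _ _ hΨ.det_pos.ne'.isUnit]
  rw [htrace, mul_sub, Finset.mul_sum, Finset.mul_sum]
  congr 1
  · ring
  · exact Finset.sum_congr rfl fun k _ => by rw [tWeight]; ring

theorem scatter_stationary_iff_fixed_point_general
    (r N : ℕ) (ν : ℝ) (hν : 0 < ν)
    (x : Fin N → Fin r → ℝ) (μ : Fin r → ℝ)
    (Ψ : Matrix (Fin r) (Fin r) ℝ) (hΨ : Ψ.PosDef)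
    (δ : Fin N → ℝ)
    (hδ : ∀ n, δ n = (x n - μ) ⬝ᵥ (Ψ⁻¹ *ᵥ (x n - μ)))
    (w : Fin N → ℝ)
    (hw : ∀ n, w n = (ν + r) / (ν + δ n)) :
    (∀ H : Matrix (Fin r) (Fin r) ℝ, H.IsSymm →
        HasDerivAt (fun t : ℝ => tLogLik r N ν x μ (Ψ + t • H)) 0 0) ↔
      (N : ℝ) • Ψ = ∑ n, w n • vecMulVec (x n - μ) (x n - μ) := by
  have hscatter : ∑ n, w n • vecMulVec (x n - μ) (x n - μ) = tWeightedScatter r N ν x μ Ψ := by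
    simp only [tWeightedScatter, tWeight, hw, hδ]
  rw [hscatter, ← sub_eq_zero]
  have hderiv := hasDerivAt_tLogLik_add_smul hν x μ hΨ
  constructor
  · intro hstationary
    have hΨs : Ψ.IsSymm := isHermitian_iff_isSymm.mp hΨ.isHermitian
    have hM := (hΨs.smul (N : ℝ)).sub (isSymm_tWeightedScatter r N ν x μ Ψ)
    refine hM.eq_zero_of_forall_trace_conj_mul_eq_zero hΨ.det_pos.ne'.isUnit hΨs fun H hH => ?_
    linarith [(hderiv H).unique (hstationary H hH)]
  · intro hfixed H _
    simpa [hfixed] using hderiv H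

/-- the derivative at `t = 0` of `t ↦ L(μ, Ψ + t•H)` vanishes for every
symmetric `H` iff the weighted sample-scatter fixed-point equation
`N • Ψ = ∑ₙ wₙ x̃ₙ x̃ₙᵀ` holds. -/
theorem scatter_stationary_iff_fixed_point
    (r N : ℕ) (hr : 1 ≤ r) (hN : 1 ≤ N) (ν : ℝ) (hν : 0 < ν)
    (x : Fin N → Fin r → ℝ) (μ : Fin r → ℝ)
    (Ψ : Matrix (Fin r) (Fin r) ℝ) (hΨ : Ψ.PosDef)
    (δ : Fin N → ℝ)
    (hδ : ∀ n, δ n = (x n - μ) ⬝ᵥ (Ψ⁻¹ *ᵥ (x n - μ)))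
    (w : Fin N → ℝ)
    (hw : ∀ n, w n = (ν + r) / (ν + δ n)) :
    (∀ H : Matrix (Fin r) (Fin r) ℝ, H.IsSymm →
        HasDerivAt (fun t : ℝ => tLogLik r N ν x μ (Ψ + t • H)) 0 0) ↔
      (N : ℝ) • Ψ = ∑ n, w n • vecMulVec (x n - μ) (x n - μ) :=
  scatter_stationary_iff_fixed_point_general r N ν hν x μ Ψ hΨ δ hδ w hw
end

section
/- For every h ∈ ℝ^r and every symmetric r×r real matrix H, the mixed second directional derivative ∂²/∂s∂t [L(μ + s·h, Ψ + t·H)] evaluated at s = t = 0 equals (1/(ν + r))·∑_{n=1}^N w_n² (x̃_nᵀΨ⁻¹HΨ⁻¹x̃_n)(x̃_nᵀΨ⁻¹h) − ∑_{n=1}^N w_n · x̃_nᵀΨ⁻¹HΨ⁻¹h. In particular, if μ satisfies the weighted-mean fixed-point equation (∑ w_n)·μ = ∑ w_n x_n, then ∑_{n=1}^N w_n x̃_n = 0, so the second summand vanishes and the mixed derivative equals only the first summand. -/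
open Matrix BigOperators Filter

/-- If `f t = f 0 + t * g t` near `0` and `g` is continuous at `0`, then `f` has
derivative `g 0` at `0`. -/
lemma hasDerivAt_of_eq_linear {f g : ℝ → ℝ} (hg : ContinuousAt g 0)
    (hfg : ∀ᶠ t in nhds (0:ℝ), f t = f 0 + t * g t) :
    HasDerivAt f (g 0) 0 := by
  rw [hasDerivAt_iff_tendsto_slope]
  have h1 : ∀ᶠ t in nhdsWithin (0:ℝ) {(0:ℝ)}ᶜ, g t = slope f 0 t := by
    filter_upwards [nhdsWithin_le_nhds hfg, self_mem_nhdsWithin] with t ht ht0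
    have ht0' : t ≠ 0 := ht0
    rw [slope_def_field, ht, sub_zero, add_sub_cancel_left, mul_div_cancel_left₀ _ ht0']
  exact Filter.Tendsto.congr' h1 (hg.tendsto.mono_left nhdsWithin_le_nhds)

/-- Derivative in `s` of the quadratic form `s ↦ (a - s•h)ᵀ M (a - s•h)` at `0`. -/
lemma hasDerivAt_quadform {r : ℕ} (a hv : Fin r → ℝ) (M : Matrix (Fin r) (Fin r) ℝ) :
    HasDerivAt (fun s : ℝ => (a - s • hv) ⬝ᵥ (M *ᵥ (a - s • hv)))
      (-(hv ⬝ᵥ (M *ᵥ a)) - a ⬝ᵥ (M *ᵥ hv)) 0 := by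
  have hfun : (fun s : ℝ => (a - s • hv) ⬝ᵥ (M *ᵥ (a - s • hv)))
      = fun s : ℝ => a ⬝ᵥ (M *ᵥ a) + s * (-(hv ⬝ᵥ (M *ᵥ a)) - a ⬝ᵥ (M *ᵥ hv))
          + s ^ 2 * (hv ⬝ᵥ (M *ᵥ hv)) := by
    funext s
    simp only [sub_dotProduct, dotProduct_sub, Matrix.mulVec_sub,
      smul_dotProduct, dotProduct_smul, Matrix.mulVec_smul, smul_eq_mul]
    ring
  rw [hfun]
  have ha : HasDerivAt (fun s : ℝ => s * (-(hv ⬝ᵥ (M *ᵥ a)) - a ⬝ᵥ (M *ᵥ hv)))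
      (-(hv ⬝ᵥ (M *ᵥ a)) - a ⬝ᵥ (M *ᵥ hv)) 0 := by
    simpa using (hasDerivAt_id (0:ℝ)).mul_const (-(hv ⬝ᵥ (M *ᵥ a)) - a ⬝ᵥ (M *ᵥ hv))
  have hb : HasDerivAt (fun s : ℝ => s ^ 2 * (hv ⬝ᵥ (M *ᵥ hv))) 0 0 := by
    simpa using (hasDerivAt_pow 2 (0:ℝ)).mul_const (hv ⬝ᵥ (M *ᵥ hv))
  simpa using (ha.const_add (a ⬝ᵥ (M *ᵥ a))).fun_add hb

lemma symm_dot {r : ℕ} {M : Matrix (Fin r) (Fin r) ℝ} (hM : Mᵀ = M) (u v : Fin r → ℝ) :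
    u ⬝ᵥ (M *ᵥ v) = v ⬝ᵥ (M *ᵥ u) := by
  have hsym : ∀ i j, M i j = M j i := by
    intro i j
    have := congrFun (congrFun hM j) i
    rwa [Matrix.transpose_apply] at this
  simp only [dotProduct, Matrix.mulVec, Finset.mul_sum]
  rw [Finset.sum_comm]
  refine Finset.sum_congr rfl fun i _ => Finset.sum_congr rfl fun j _ => ?_
  rw [hsym i j]; ring

lemma eventually_det_ne {r : ℕ} (Ψ H : Matrix (Fin r) (Fin r) ℝ) (hdet : Ψ.det ≠ 0) :
    ∀ᶠ t : ℝ in nhds 0, (Ψ + t • H).det ≠ 0 := by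
  have hcont : Continuous (fun t : ℝ => (Ψ + t • H)) :=
    continuous_const.add (continuous_id.smul continuous_const)
  have hcd : ContinuousAt (fun t : ℝ => (Ψ + t • H).det) 0 :=
    (hcont.matrix_det).continuousAt
  have h0 : (Ψ + (0:ℝ) • H).det ≠ 0 := by simpa using hdet
  exact hcd.eventually_ne h0

lemma continuousAt_invpath {r : ℕ} (Ψ H : Matrix (Fin r) (Fin r) ℝ) (hdet : Ψ.det ≠ 0) :
    ContinuousAt (fun t : ℝ => (Ψ + t • H)⁻¹) 0 := by
  have hcont : Continuous (fun t : ℝ => (Ψ + t • H)) :=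
    continuous_const.add (continuous_id.smul continuous_const)
  have h1 : ContinuousAt Inv.inv (Ψ + (0:ℝ) • H) := by
    apply continuousAt_matrix_inv
    rw [Ring.inverse_eq_inv']
    exact continuousAt_inv₀ (by simpa using hdet)
  exact ContinuousAt.comp (g := Inv.inv) (f := fun t : ℝ => Ψ + t • H) h1 hcont.continuousAt

lemma inv_expand {r : ℕ} (Ψ H : Matrix (Fin r) (Fin r) ℝ) (hdet : IsUnit Ψ.det) (t : ℝ)
    (ht : IsUnit (Ψ + t • H).det) :
    (Ψ + t • H)⁻¹ = Ψ⁻¹ - t • (Ψ⁻¹ * H * (Ψ + t • H)⁻¹) := by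
  have e : Ψ⁻¹ * (Ψ + t • H) = 1 + t • (Ψ⁻¹ * H) := by
    rw [mul_add, Matrix.nonsing_inv_mul _ hdet, Matrix.mul_smul]
  have h1 : Ψ⁻¹ * ((Ψ + t • H) * (Ψ + t • H)⁻¹) = Ψ⁻¹ := by
    rw [Matrix.mul_nonsing_inv _ ht, mul_one]
  rw [← mul_assoc, e, add_mul, one_mul, Matrix.smul_mul] at h1
  exact eq_sub_of_add_eq h1

lemma hasDerivAt_quad_inv {r : ℕ} (Ψ H : Matrix (Fin r) (Fin r) ℝ) (hdet : Ψ.det ≠ 0)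
    (v : Fin r → ℝ) :
    HasDerivAt (fun t : ℝ => v ⬝ᵥ ((Ψ + t • H)⁻¹ *ᵥ v))
      (-(v ⬝ᵥ ((Ψ⁻¹ * H * Ψ⁻¹) *ᵥ v))) 0 := by
  set g : ℝ → ℝ := fun t => -(v ⬝ᵥ ((Ψ⁻¹ * H * (Ψ + t • H)⁻¹) *ᵥ v)) with hgdef
  have hg0 : g 0 = -(v ⬝ᵥ ((Ψ⁻¹ * H * Ψ⁻¹) *ᵥ v)) := by simp [hgdef]
  have hgc : ContinuousAt g 0 := by
    have hM : Continuous (fun M : Matrix (Fin r) (Fin r) ℝ => v ⬝ᵥ ((Ψ⁻¹ * H * M) *ᵥ v)) :=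
      continuous_const.dotProduct
        (((continuous_const.matrix_mul continuous_id).matrix_mulVec continuous_const))
    exact ((hM.continuousAt).comp (continuousAt_invpath Ψ H hdet)).neg
  have key : HasDerivAt (fun t : ℝ => v ⬝ᵥ ((Ψ + t • H)⁻¹ *ᵥ v)) (g 0) 0 := by
    apply hasDerivAt_of_eq_linear hgc
    filter_upwards [eventually_det_ne Ψ H hdet] with t ht
    have hU : IsUnit (Ψ + t • H).det := isUnit_iff_ne_zero.mpr ht
    have hUΨ : IsUnit Ψ.det := isUnit_iff_ne_zero.mpr hdet
    rw [inv_expand Ψ H hUΨ t hU]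
    simp only [Matrix.sub_mulVec, dotProduct_sub, Matrix.smul_mulVec,
      dotProduct_smul, smul_eq_mul, hgdef]
    have h00 : (Ψ + (0:ℝ) • H)⁻¹ = Ψ⁻¹ := by simp
    rw [h00]
    ring
  rwa [hg0] at key

lemma differentiableAt_det_path {r : ℕ} (Ψ H : Matrix (Fin r) (Fin r) ℝ) :
    DifferentiableAt ℝ (fun t : ℝ => (Ψ + t • H).det) 0 := by
  simp only [Matrix.det_apply, Units.smul_def, zsmul_eq_mul]
  apply DifferentiableAt.fun_sum
  intro σ _
  apply DifferentiableAt.const_mul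
  apply DifferentiableAt.fun_finsetProd
  intro i _
  simp only [Matrix.add_apply, Matrix.smul_apply, smul_eq_mul]
  exact (differentiableAt_const _).add (differentiableAt_id.mul (differentiableAt_const _))

/-- the mixed second directional derivative `∂²/∂s∂t L(μ + s•h, Ψ + t•H)`
at `s = t = 0` equals
`(1/(ν+r))·∑ₙ wₙ² (x̃ₙᵀΨ⁻¹HΨ⁻¹x̃ₙ)(x̃ₙᵀΨ⁻¹h) − ∑ₙ wₙ x̃ₙᵀΨ⁻¹HΨ⁻¹h`;
moreover, if `μ` satisfies the weighted-mean fixed-point equation then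
`∑ₙ wₙ x̃ₙ = 0` and only the first summand remains (the μ–Ψ block of the Fisher
information matrix). -/
theorem mixed_second_deriv_location_scatter
    (r N : ℕ) (hr : 1 ≤ r) (hN : 1 ≤ N) (ν : ℝ) (hν : 0 < ν)
    (x : Fin N → Fin r → ℝ) (μ : Fin r → ℝ)
    (Ψ : Matrix (Fin r) (Fin r) ℝ) (hΨ : Ψ.PosDef)
    (δ : Fin N → ℝ)
    (hδ : ∀ n, δ n = (x n - μ) ⬝ᵥ (Ψ⁻¹ *ᵥ (x n - μ)))
    (w : Fin N → ℝ)
    (hw : ∀ n, w n = (ν + r) / (ν + δ n))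
    (h : Fin r → ℝ) (H : Matrix (Fin r) (Fin r) ℝ) (hH : H.IsSymm) :
    (deriv (fun s : ℝ =>
        deriv (fun t : ℝ => tLogLik r N ν x (μ + s • h) (Ψ + t • H)) 0) 0
      = (1 / (ν + r)) * ∑ n, (w n) ^ 2 *
            ((x n - μ) ⬝ᵥ (Ψ⁻¹ *ᵥ (H *ᵥ (Ψ⁻¹ *ᵥ (x n - μ))))) *
            ((x n - μ) ⬝ᵥ (Ψ⁻¹ *ᵥ h))
        - ∑ n, w n * ((x n - μ) ⬝ᵥ (Ψ⁻¹ *ᵥ (H *ᵥ (Ψ⁻¹ *ᵥ h))))) ∧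
    ((∑ n, w n) • μ = ∑ n, w n • x n →
      (∑ n, w n • (x n - μ) = 0 ∧
        deriv (fun s : ℝ =>
            deriv (fun t : ℝ => tLogLik r N ν x (μ + s • h) (Ψ + t • H)) 0) 0
          = (1 / (ν + r)) * ∑ n, (w n) ^ 2 *
              ((x n - μ) ⬝ᵥ (Ψ⁻¹ *ᵥ (H *ᵥ (Ψ⁻¹ *ᵥ (x n - μ))))) *
              ((x n - μ) ⬝ᵥ (Ψ⁻¹ *ᵥ h)))) := by
  have hdet : Ψ.det ≠ 0 := ne_of_gt hΨ.det_pos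
  have hrpos : (0:ℝ) < ν + r := by positivity
  have hquadnn : ∀ v : Fin r → ℝ, 0 ≤ v ⬝ᵥ (Ψ⁻¹ *ᵥ v) := by
    intro v
    simpa using hΨ.inv.posSemidef.dotProduct_mulVec_nonneg v
  have hδpos : ∀ v : Fin r → ℝ, 0 < ν + v ⬝ᵥ (Ψ⁻¹ *ᵥ v) := by
    intro v; have := hquadnn v; linarith
  -- symmetry facts
  have hΨs : Ψᵀ = Ψ := by
    have := hΨ.1.eq
    rwa [Matrix.conjTranspose_eq_transpose_of_trivial] at this
  have hΨinvs : Ψ⁻¹ᵀ = Ψ⁻¹ := by rw [Matrix.transpose_nonsing_inv, hΨs]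
  have hKs : (Ψ⁻¹ * H * Ψ⁻¹)ᵀ = Ψ⁻¹ * H * Ψ⁻¹ := by
    simp [Matrix.transpose_mul, hΨinvs, hH.eq, Matrix.mul_assoc]
  -- the inner derivative (in t) as a function of s
  set c : ℝ := deriv (fun t : ℝ => -((N:ℝ)/2) * Real.log (Ψ + t • H).det) 0 with hc
  have inner : ∀ s : ℝ,
      deriv (fun t : ℝ => tLogLik r N ν x (μ + s • h) (Ψ + t • H)) 0
        = c + ((ν + r)/2) * ∑ n, ((x n - μ - s • h) ⬝ᵥ ((Ψ⁻¹ * H * Ψ⁻¹) *ᵥ (x n - μ - s • h)))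
            / (ν + (x n - μ - s • h) ⬝ᵥ (Ψ⁻¹ *ᵥ (x n - μ - s • h))) := by
    intro s
    set v : Fin N → Fin r → ℝ := fun n => x n - μ - s • h with hv
    have hfun : (fun t : ℝ => tLogLik r N ν x (μ + s • h) (Ψ + t • H))
        = fun t : ℝ => (-((N:ℝ)/2) * Real.log (Ψ + t • H).det)
            - ((ν + r)/2) * ∑ n, Real.log (1 + (v n ⬝ᵥ ((Ψ + t • H)⁻¹ *ᵥ v n)) / ν) := by
      funext t
      simp [tLogLik, hv, sub_add_eq_sub_sub]
    have hdet0 : (Ψ + (0:ℝ) • H).det ≠ 0 := by simpa using hdet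
    have hA : DifferentiableAt ℝ (fun t : ℝ => -((N:ℝ)/2) * Real.log (Ψ + t • H).det) 0 :=
      ((differentiableAt_det_path Ψ H).log hdet0).const_mul _
    have h00 : (Ψ + (0:ℝ) • H)⁻¹ = Ψ⁻¹ := by simp
    have hB : HasDerivAt
        (fun t : ℝ => ((ν + (r:ℝ))/2) * ∑ n, Real.log (1 + (v n ⬝ᵥ ((Ψ + t • H)⁻¹ *ᵥ v n)) / ν))
        (((ν + (r:ℝ))/2) * ∑ n, (-(v n ⬝ᵥ ((Ψ⁻¹ * H * Ψ⁻¹) *ᵥ v n)) / ν)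
            / (1 + (v n ⬝ᵥ (Ψ⁻¹ *ᵥ v n)) / ν)) 0 := by
      apply HasDerivAt.const_mul
      apply HasDerivAt.fun_sum
      intro n _
      have h1 : HasDerivAt (fun t : ℝ => 1 + (v n ⬝ᵥ ((Ψ + t • H)⁻¹ *ᵥ v n)) / ν)
          (-(v n ⬝ᵥ ((Ψ⁻¹ * H * Ψ⁻¹) *ᵥ v n)) / ν) 0 :=
        ((hasDerivAt_quad_inv Ψ H hdet (v n)).div_const ν).const_add 1
      have h2 : (1 : ℝ) + (v n ⬝ᵥ ((Ψ + (0:ℝ) • H)⁻¹ *ᵥ v n)) / ν ≠ 0 := by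
        rw [h00]
        have := hquadnn (v n)
        positivity
      have h3 := h1.log h2
      rw [h00] at h3
      exact h3
    rw [hfun, deriv_fun_sub hA hB.differentiableAt, hB.deriv]
    have hc' : deriv (fun t : ℝ => -((N:ℝ)/2) * Real.log (Ψ + t • H).det) 0 = c := rfl
    rw [hc']
    have hterm : ∀ n, (-(v n ⬝ᵥ ((Ψ⁻¹ * H * Ψ⁻¹) *ᵥ v n)) / ν)
          / (1 + (v n ⬝ᵥ (Ψ⁻¹ *ᵥ v n)) / ν)
        = -((v n ⬝ᵥ ((Ψ⁻¹ * H * Ψ⁻¹) *ᵥ v n)) / (ν + v n ⬝ᵥ (Ψ⁻¹ *ᵥ v n))) := by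
      intro n
      have hgen : ∀ A q : ℝ, 0 < ν + q → (-A/ν)/(1 + q/ν) = -(A/(ν+q)) := by
        intro A q hq
        have h2 : ν + q ≠ 0 := ne_of_gt hq
        have h3 : ν ≠ 0 := ne_of_gt hν
        field_simp
      exact hgen _ _ (hδpos (v n))
    rw [Finset.sum_congr rfl fun n _ => hterm n, Finset.sum_neg_distrib]
    ring
  -- the outer derivative
  have houter : HasDerivAt
      (fun s : ℝ => c + ((ν + (r:ℝ))/2) *
          ∑ n, ((x n - μ - s • h) ⬝ᵥ ((Ψ⁻¹ * H * Ψ⁻¹) *ᵥ (x n - μ - s • h)))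
            / (ν + (x n - μ - s • h) ⬝ᵥ (Ψ⁻¹ *ᵥ (x n - μ - s • h))))
      (((ν + (r:ℝ))/2) * ∑ n,
          ((-(h ⬝ᵥ ((Ψ⁻¹ * H * Ψ⁻¹) *ᵥ (x n - μ))) - (x n - μ) ⬝ᵥ ((Ψ⁻¹ * H * Ψ⁻¹) *ᵥ h))
              * (ν + (x n - μ) ⬝ᵥ (Ψ⁻¹ *ᵥ (x n - μ)))
            - ((x n - μ) ⬝ᵥ ((Ψ⁻¹ * H * Ψ⁻¹) *ᵥ (x n - μ)))
              * (-(h ⬝ᵥ (Ψ⁻¹ *ᵥ (x n - μ))) - (x n - μ) ⬝ᵥ (Ψ⁻¹ *ᵥ h)))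
            / (ν + (x n - μ) ⬝ᵥ (Ψ⁻¹ *ᵥ (x n - μ))) ^ 2) 0 := by
    apply HasDerivAt.const_add
    apply HasDerivAt.const_mul
    apply HasDerivAt.fun_sum
    intro n _
    have hnum := hasDerivAt_quadform (x n - μ) h (Ψ⁻¹ * H * Ψ⁻¹)
    have hden := (hasDerivAt_quadform (x n - μ) h Ψ⁻¹).const_add ν
    have hden0 : ν + (x n - μ - (0:ℝ) • h) ⬝ᵥ (Ψ⁻¹ *ᵥ (x n - μ - (0:ℝ) • h)) ≠ 0 := by
      simpa using ne_of_gt (hδpos (x n - μ))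
    have := hnum.fun_div hden hden0
    simpa using this
  -- assemble
  have hfun2 : (fun s : ℝ =>
      deriv (fun t : ℝ => tLogLik r N ν x (μ + s • h) (Ψ + t • H)) 0)
      = fun s : ℝ => c + ((ν + (r:ℝ))/2) *
          ∑ n, ((x n - μ - s • h) ⬝ᵥ ((Ψ⁻¹ * H * Ψ⁻¹) *ᵥ (x n - μ - s • h)))
            / (ν + (x n - μ - s • h) ⬝ᵥ (Ψ⁻¹ *ᵥ (x n - μ - s • h))) := funext inner
  have hKv : ∀ u : Fin r → ℝ, Ψ⁻¹ *ᵥ (H *ᵥ (Ψ⁻¹ *ᵥ u)) = (Ψ⁻¹ * H * Ψ⁻¹) *ᵥ u := by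
    intro u; rw [Matrix.mulVec_mulVec, Matrix.mulVec_mulVec]
  have key : deriv (fun s : ℝ =>
      deriv (fun t : ℝ => tLogLik r N ν x (μ + s • h) (Ψ + t • H)) 0) 0
      = (1 / (ν + r)) * ∑ n, (w n) ^ 2 *
            ((x n - μ) ⬝ᵥ (Ψ⁻¹ *ᵥ (H *ᵥ (Ψ⁻¹ *ᵥ (x n - μ))))) *
            ((x n - μ) ⬝ᵥ (Ψ⁻¹ *ᵥ h))
        - ∑ n, w n * ((x n - μ) ⬝ᵥ (Ψ⁻¹ *ᵥ (H *ᵥ (Ψ⁻¹ *ᵥ h)))) := by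
    rw [hfun2, houter.deriv]
    simp only [hKv]
    rw [Finset.mul_sum, Finset.mul_sum, ← Finset.sum_sub_distrib]
    apply Finset.sum_congr rfl
    intro n _
    have hδn := hδ n
    have hwn := hw n
    have hpos : 0 < ν + δ n := by rw [hδn]; exact hδpos _
    have hsymK : h ⬝ᵥ ((Ψ⁻¹ * H * Ψ⁻¹) *ᵥ (x n - μ))
        = (x n - μ) ⬝ᵥ ((Ψ⁻¹ * H * Ψ⁻¹) *ᵥ h) := symm_dot hKs h _
    have hsymΨ : h ⬝ᵥ (Ψ⁻¹ *ᵥ (x n - μ)) = (x n - μ) ⬝ᵥ (Ψ⁻¹ *ᵥ h) := symm_dot hΨinvs h _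
    rw [hwn, ← hδn, hsymK, hsymΨ]
    have h1 : ν + δ n ≠ 0 := ne_of_gt hpos
    have h2 : ν + (r:ℝ) ≠ 0 := ne_of_gt hrpos
    field_simp
    ring
  refine ⟨key, fun hfix => ?_⟩
  have hz : ∑ n, w n • (x n - μ) = 0 := by
    have hsplit : ∑ n, w n • (x n - μ) = (∑ n, w n • x n) - (∑ n, w n) • μ := by
      rw [Finset.sum_smul, ← Finset.sum_sub_distrib]
      exact Finset.sum_congr rfl fun n _ => smul_sub _ _ _
    rw [hsplit, ← hfix, sub_self]
  refine ⟨hz, ?_⟩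
  rw [key]
  have hzero : ∑ n, w n * ((x n - μ) ⬝ᵥ (Ψ⁻¹ *ᵥ (H *ᵥ (Ψ⁻¹ *ᵥ h)))) = 0 := by
    have hswap : ∑ n, w n * ((x n - μ) ⬝ᵥ (Ψ⁻¹ *ᵥ (H *ᵥ (Ψ⁻¹ *ᵥ h))))
        = (∑ n, w n • (x n - μ)) ⬝ᵥ (Ψ⁻¹ *ᵥ (H *ᵥ (Ψ⁻¹ *ᵥ h))) := by
      simp only [dotProduct, Finset.sum_apply, Pi.smul_apply, smul_eq_mul,
        Finset.mul_sum, Finset.sum_mul]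
      rw [Finset.sum_comm]
      exact Finset.sum_congr rfl fun i _ => Finset.sum_congr rfl fun n _ => by ring
    rw [hswap, hz]
    simp
  rw [hzero, sub_zero]
end

section
/- For every symmetric r×r real matrix H, the second derivative at t = 0 of t ↦ L(μ, Ψ + t·H) equals (N/2)·tr(Ψ⁻¹HΨ⁻¹H) + (1/(2(ν + r)))·∑_{n=1}^N w_n² (x̃_nᵀΨ⁻¹HΨ⁻¹x̃_n)² − ∑_{n=1}^N w_n · x̃_nᵀΨ⁻¹HΨ⁻¹HΨ⁻¹x̃_n. -/
/-!
Along the line `t ↦ Ψ + t • H` the inverse `P t = (Ψ + t • H)⁻¹` satisfies `P' = -P H P`, and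
`log det` has derivative `tr (P H)` (Jacobi's formula, read off from the linear coefficient of
`det (1 + s • M)`). Hence the first derivative
`-(N/2) tr (P H) + ((ν + r)/2) ∑ₙ x̃ₙᵀ P H P x̃ₙ / (ν + x̃ₙᵀ P x̃ₙ)` is valid on a neighbourhood of
`0`, where `det` and the denominators stay nonzero, and the quotient rule at `0` gives the
formula, the weights `wₙ = (ν + r)/(ν + δₙ)` appearing from the squared denominators.
-/

open Matrix BigOperators

open Filter Topology

-- Matrices carry no global norm; any choice will do, as `HasDerivAt` only sees the topology.
attribute [local instance] Matrix.linftyOpNormedRing Matrix.linftyOpNormedAlgebra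

theorem LinearMap.hasDerivAt_comp {𝕜 E F : Type*} [NontriviallyNormedField 𝕜] [CompleteSpace 𝕜]
    [NormedAddCommGroup E] [NormedSpace 𝕜 E] [FiniteDimensional 𝕜 E]
    [NormedAddCommGroup F] [NormedSpace 𝕜 F] (ℓ : E →ₗ[𝕜] F)
    {f : 𝕜 → E} {f' : E} {t : 𝕜} (hf : HasDerivAt f f' t) :
    HasDerivAt (fun s => ℓ (f s)) (ℓ f') t :=
  ℓ.toContinuousLinearMap.hasFDerivAt.comp_hasDerivAt t hf

theorem Real.hasDerivAt_log_one_add_div {q : ℝ → ℝ} {q' ν t : ℝ} (hq : HasDerivAt q q' t)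
    (hν : ν ≠ 0) (ht : ν + q t ≠ 0) :
    HasDerivAt (fun s => Real.log (1 + q s / ν)) (q' / (ν + q t)) t := by
  have hpos : 1 + q t / ν = (ν + q t) / ν := by field_simp
  convert ((hq.div_const ν).const_add 1).log (by rw [hpos]; exact div_ne_zero ht hν) using 1
  rw [hpos, div_div_div_cancel_right₀ hν]

namespace Matrix

variable {n : Type*} [Fintype n] [DecidableEq n]

section

variable {𝕜 : Type*} [RCLike 𝕜]

theorem _root_.HasDerivAt.matrix_trace {f : 𝕜 → Matrix n n 𝕜} {f' : Matrix n n 𝕜} {t : 𝕜}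
    (hf : HasDerivAt f f' t) : HasDerivAt (fun s => trace (f s)) (trace f') t :=
  (traceLinearMap n 𝕜 𝕜).hasDerivAt_comp hf

theorem _root_.HasDerivAt.dotProduct_mulVec_s8 {f : 𝕜 → Matrix n n 𝕜} {f' : Matrix n n 𝕜} {t : 𝕜}
    (hf : HasDerivAt f f' t) (v : n → 𝕜) :
    HasDerivAt (fun s => v ⬝ᵥ (f s *ᵥ v)) (v ⬝ᵥ (f' *ᵥ v)) t := by
  simpa [toLinearMap₂'_apply'] using
    (((toLinearMap₂' 𝕜).toLinearMap.flip v).flip v).hasDerivAt_comp hf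

theorem _root_.HasDerivAt.matrix_inv {f : 𝕜 → Matrix n n 𝕜} {f' : Matrix n n 𝕜} {t : 𝕜}
    (hf : HasDerivAt f f' t) (h : (f t).det ≠ 0) :
    HasDerivAt (fun s => (f s)⁻¹) (-((f t)⁻¹ * f' * (f t)⁻¹)) t := by
  obtain ⟨u, hu⟩ := (isUnit_iff_isUnit_det _).mpr h.isUnit
  have hinv : HasFDerivAt Ring.inverse
      (-ContinuousLinearMap.mulLeftRight 𝕜 _ (f t)⁻¹ (f t)⁻¹) (f t) := by
    rw [← hu, nonsing_inv_eq_ringInverse, Ring.inverse_unit]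
    exact hasFDerivAt_ringInverse u
  have := hinv.comp_hasDerivAt t hf
  simp only [Function.comp_def, ← nonsing_inv_eq_ringInverse] at this
  exact this

theorem hasDerivAt_det_one_add_smul_s8 (M : Matrix n n 𝕜) :
    HasDerivAt (fun t : 𝕜 => det (1 + t • M)) (trace M) 0 := by
  have h := (det (1 + (Polynomial.X : Polynomial 𝕜) • M.map Polynomial.C)).hasDerivAt 0
  rw [derivative_det_one_add_X_smul] at h
  convert h using 2 with t
  simp [eval_det, ← smul_eq_mul_diagonal]

variable {A H : Matrix n n 𝕜} {t : 𝕜}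

theorem hasDerivAt_det_add_smul_s8 (h : (A + t • H).det ≠ 0) :
    HasDerivAt (fun s => det (A + s • H)) (det (A + t • H) * trace ((A + t • H)⁻¹ * H)) t := by
  set B := A + t • H with hB_def
  have hB : ∀ s, A + s • H = B * (1 + (s - t) • (B⁻¹ * H)) := fun s => by
    rw [Matrix.mul_add, Matrix.mul_one, Matrix.mul_smul, mul_nonsing_inv_cancel_left _ _ h.isUnit,
      hB_def]
    module
  have h0 := hasDerivAt_det_one_add_smul_s8 (B⁻¹ * H)
  rw [← sub_self t] at h0
  simpa only [hB, det_mul] using (h0.comp_sub_const t t).const_mul B.det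

theorem hasDerivAt_inv_add_smul_s8 (h : (A + t • H).det ≠ 0) :
    HasDerivAt (fun s => (A + s • H)⁻¹) (-((A + t • H)⁻¹ * H * (A + t • H)⁻¹)) t := by
  have hline : HasDerivAt (fun s => A + s • H) ((1 : 𝕜) • H) t :=
    ((hasDerivAt_id t).smul_const H).const_add A
  rw [one_smul] at hline
  exact hline.matrix_inv h

theorem hasDerivAt_trace_inv_add_smul_mul (h : (A + t • H).det ≠ 0) :
    HasDerivAt (fun s => trace ((A + s • H)⁻¹ * H))
      (-trace ((A + t • H)⁻¹ * H * (A + t • H)⁻¹ * H)) t := by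
  simpa [Matrix.neg_mul] using ((hasDerivAt_inv_add_smul_s8 h).mul_const H).matrix_trace

theorem hasDerivAt_dotProduct_inv_add_smul_mulVec (h : (A + t • H).det ≠ 0) (v : n → 𝕜) :
    HasDerivAt (fun s => v ⬝ᵥ ((A + s • H)⁻¹ *ᵥ v))
      (-(v ⬝ᵥ ((A + t • H)⁻¹ *ᵥ (H *ᵥ ((A + t • H)⁻¹ *ᵥ v))))) t := by
  simpa [Matrix.neg_mulVec, mulVec_mulVec, Matrix.mul_assoc] using
    (hasDerivAt_inv_add_smul_s8 h).dotProduct_mulVec_s8 v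

theorem hasDerivAt_dotProduct_inv_add_smul_mulVec_mulVec (h : (A + t • H).det ≠ 0)
    (v : n → 𝕜) :
    HasDerivAt (fun s => v ⬝ᵥ ((A + s • H)⁻¹ *ᵥ (H *ᵥ ((A + s • H)⁻¹ *ᵥ v))))
      (-2 * (v ⬝ᵥ ((A + t • H)⁻¹ *ᵥ (H *ᵥ ((A + t • H)⁻¹ *ᵥ (H *ᵥ ((A + t • H)⁻¹ *ᵥ v))))))) t := by
  set P := (A + t • H)⁻¹
  have hP := hasDerivAt_inv_add_smul_s8 h
  have hPHP : HasDerivAt (fun s => (A + s • H)⁻¹ * H * (A + s • H)⁻¹)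
      (-(P * H * P) * H * P + P * H * -(P * H * P)) t :=
    (hP.mul_const H).fun_mul hP
  convert hPHP.dotProduct_mulVec_s8 v using 1
  · simp only [mulVec_mulVec, Matrix.mul_assoc]
  · simp only [Matrix.neg_mul, Matrix.mul_neg, Matrix.add_mulVec, Matrix.neg_mulVec,
      dotProduct_add, dotProduct_neg, mulVec_mulVec, Matrix.mul_assoc]
    ring

end

theorem hasDerivAt_log_det_add_smul_s8 {A H : Matrix n n ℝ} {t : ℝ} (h : (A + t • H).det ≠ 0) :
    HasDerivAt (fun s => Real.log (A + s • H).det) (trace ((A + t • H)⁻¹ * H)) t := by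
  simpa [h] using (hasDerivAt_det_add_smul_s8 h).log h

end Matrix

section

variable {r N : ℕ} {ν : ℝ} {x : Fin N → Fin r → ℝ} {μ : Fin r → ℝ} {A H : Matrix (Fin r) (Fin r) ℝ}
  {t : ℝ}

variable (r N ν x μ) in
noncomputable def tLogLikDirDeriv (B H : Matrix (Fin r) (Fin r) ℝ) : ℝ :=
  -((N : ℝ) / 2) * trace (B⁻¹ * H)
    + ((ν + r) / 2) * ∑ n, (x n - μ) ⬝ᵥ (B⁻¹ *ᵥ (H *ᵥ (B⁻¹ *ᵥ (x n - μ))))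
      / (ν + (x n - μ) ⬝ᵥ (B⁻¹ *ᵥ (x n - μ)))

theorem hasDerivAt_tLogLik_add_smul_s8 (hν : ν ≠ 0) (hdet : (A + t • H).det ≠ 0)
    (hq : ∀ n, ν + (x n - μ) ⬝ᵥ ((A + t • H)⁻¹ *ᵥ (x n - μ)) ≠ 0) :
    HasDerivAt (fun s => tLogLik r N ν x μ (A + s • H))
      (tLogLikDirDeriv r N ν x μ (A + t • H) H) t := by
  have hsum := HasDerivAt.fun_sum (u := Finset.univ) fun n _ =>
    Real.hasDerivAt_log_one_add_div (hasDerivAt_dotProduct_inv_add_smul_mulVec hdet (x n - μ))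
      hν (hq n)
  refine (((hasDerivAt_log_det_add_smul_s8 hdet).const_mul (-((N : ℝ) / 2))).sub
    (hsum.const_mul ((ν + r) / 2))).congr_deriv ?_
  simp only [tLogLikDirDeriv, neg_div, Finset.sum_neg_distrib]
  ring

theorem hasDerivAt_tLogLikDirDeriv_add_smul (hdet : (A + t • H).det ≠ 0)
    (hq : ∀ n, ν + (x n - μ) ⬝ᵥ ((A + t • H)⁻¹ *ᵥ (x n - μ)) ≠ 0) :
    HasDerivAt (fun s => tLogLikDirDeriv r N ν x μ (A + s • H) H)
      ((N : ℝ) / 2 * trace ((A + t • H)⁻¹ * H * (A + t • H)⁻¹ * H)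
        + ((ν + r) / 2) * ∑ n,
          (((x n - μ) ⬝ᵥ ((A + t • H)⁻¹ *ᵥ (H *ᵥ ((A + t • H)⁻¹ *ᵥ (x n - μ))))) ^ 2
            - 2 * ((x n - μ) ⬝ᵥ ((A + t • H)⁻¹ *ᵥ (H *ᵥ ((A + t • H)⁻¹ *ᵥ
                (H *ᵥ ((A + t • H)⁻¹ *ᵥ (x n - μ)))))))
              * (ν + (x n - μ) ⬝ᵥ ((A + t • H)⁻¹ *ᵥ (x n - μ))))
          / (ν + (x n - μ) ⬝ᵥ ((A + t • H)⁻¹ *ᵥ (x n - μ))) ^ 2) t := by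
  have hsum := HasDerivAt.fun_sum (u := Finset.univ) fun n _ =>
    (hasDerivAt_dotProduct_inv_add_smul_mulVec_mulVec hdet (x n - μ)).fun_div
      ((hasDerivAt_dotProduct_inv_add_smul_mulVec hdet (x n - μ)).const_add ν) (hq n)
  refine (((hasDerivAt_trace_inv_add_smul_mul hdet).const_mul (-((N : ℝ) / 2))).add
    (hsum.const_mul ((ν + r) / 2))).congr_deriv ?_
  rw [neg_mul_neg]
  congr 3 with n
  ring

end

theorem second_deriv_scatter_general
    (r N : ℕ) (ν : ℝ) (hν : 0 < ν)
    (x : Fin N → Fin r → ℝ) (μ : Fin r → ℝ)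
    (Ψ : Matrix (Fin r) (Fin r) ℝ) (hΨ : Ψ.PosDef)
    (δ : Fin N → ℝ)
    (hδ : ∀ n, δ n = (x n - μ) ⬝ᵥ (Ψ⁻¹ *ᵥ (x n - μ)))
    (w : Fin N → ℝ)
    (hw : ∀ n, w n = (ν + r) / (ν + δ n))
    (H : Matrix (Fin r) (Fin r) ℝ) :
    deriv (deriv (fun t : ℝ => tLogLik r N ν x μ (Ψ + t • H))) 0
      = ((N : ℝ) / 2) * Matrix.trace (Ψ⁻¹ * H * Ψ⁻¹ * H)
        + (1 / (2 * (ν + r))) * ∑ n, (w n) ^ 2 *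
            ((x n - μ) ⬝ᵥ (Ψ⁻¹ *ᵥ (H *ᵥ (Ψ⁻¹ *ᵥ (x n - μ))))) ^ 2
        - ∑ n, w n *
            ((x n - μ) ⬝ᵥ (Ψ⁻¹ *ᵥ (H *ᵥ (Ψ⁻¹ *ᵥ (H *ᵥ (Ψ⁻¹ *ᵥ (x n - μ))))))) := by
  have hdet : (Ψ + (0 : ℝ) • H).det ≠ 0 := by simpa using hΨ.det_pos.ne'
  have hδpos : ∀ n, 0 < ν + δ n := fun n => by
    rw [hδ n]
    simpa using add_pos_of_pos_of_nonneg hν (hΨ.inv.posSemidef.dotProduct_mulVec_nonneg (x n - μ))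
  have hq : ∀ n, ν + (x n - μ) ⬝ᵥ ((Ψ + (0 : ℝ) • H)⁻¹ *ᵥ (x n - μ)) ≠ 0 := fun n => by
    simpa [← hδ] using (hδpos n).ne'
  have hnear : ∀ᶠ t in 𝓝 (0 : ℝ), (Ψ + t • H).det ≠ 0 ∧
      ∀ n, ν + (x n - μ) ⬝ᵥ ((Ψ + t • H)⁻¹ *ᵥ (x n - μ)) ≠ 0 :=
    ((hasDerivAt_det_add_smul_s8 hdet).continuousAt.eventually_ne hdet).and <|
      eventually_all.2 fun n =>
        (((hasDerivAt_dotProduct_inv_add_smul_mulVec hdet _).const_add ν).continuousAt.eventually_ne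
          (hq n))
  have hderiv : deriv (fun t => tLogLik r N ν x μ (Ψ + t • H))
      =ᶠ[𝓝 (0 : ℝ)] fun t => tLogLikDirDeriv r N ν x μ (Ψ + t • H) H :=
    hnear.mono fun t ht => (hasDerivAt_tLogLik_add_smul_s8 hν.ne' ht.1 ht.2).deriv
  rw [hderiv.deriv_eq, (hasDerivAt_tLogLikDirDeriv_add_smul hdet hq).deriv]
  simp only [zero_smul, add_zero, ← hδ, hw]
  have hνr : ν + r ≠ 0 := by positivity
  rw [add_sub_assoc, Finset.mul_sum, Finset.mul_sum, ← Finset.sum_sub_distrib]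
  congr 1
  refine Finset.sum_congr rfl fun n _ => ?_
  have hδn := (hδpos n).ne'
  field_simp

/-- the second derivative at `t = 0` of `t ↦ L(μ, Ψ + t•H)` equals
`(N/2)·tr(Ψ⁻¹HΨ⁻¹H) + (1/(2(ν+r)))·∑ₙ wₙ² (x̃ₙᵀΨ⁻¹HΨ⁻¹x̃ₙ)² − ∑ₙ wₙ x̃ₙᵀΨ⁻¹HΨ⁻¹HΨ⁻¹x̃ₙ`
(the Ψ–Ψ block of the Fisher information matrix). -/
theorem second_deriv_scatter
    (r N : ℕ) (hr : 1 ≤ r) (hN : 1 ≤ N) (ν : ℝ) (hν : 0 < ν)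
    (x : Fin N → Fin r → ℝ) (μ : Fin r → ℝ)
    (Ψ : Matrix (Fin r) (Fin r) ℝ) (hΨ : Ψ.PosDef)
    (δ : Fin N → ℝ)
    (hδ : ∀ n, δ n = (x n - μ) ⬝ᵥ (Ψ⁻¹ *ᵥ (x n - μ)))
    (w : Fin N → ℝ)
    (hw : ∀ n, w n = (ν + r) / (ν + δ n))
    (H : Matrix (Fin r) (Fin r) ℝ) (hH : H.IsSymm) :
    deriv (deriv (fun t : ℝ => tLogLik r N ν x μ (Ψ + t • H))) 0
      = ((N : ℝ) / 2) * Matrix.trace (Ψ⁻¹ * H * Ψ⁻¹ * H)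
        + (1 / (2 * (ν + r))) * ∑ n, (w n) ^ 2 *
            ((x n - μ) ⬝ᵥ (Ψ⁻¹ *ᵥ (H *ᵥ (Ψ⁻¹ *ᵥ (x n - μ))))) ^ 2
        - ∑ n, w n *
            ((x n - μ) ⬝ᵥ (Ψ⁻¹ *ᵥ (H *ᵥ (Ψ⁻¹ *ᵥ (H *ᵥ (Ψ⁻¹ *ᵥ (x n - μ))))))) :=
  second_deriv_scatter_general r N ν hν x μ Ψ hΨ δ hδ w hw H
end

section
/- Fix integers r ≥ 1, l ≥ 1, data points x_1, …, x_N ∈ ℝ^r partitioned into nonempty clusters X_1, …, X_l of sizes N_1, …, N_l (∑_m N_m = N); for each m fix μ_m ∈ ℝ^r and a symmetric positive definite r×r matrix Σ_m, and for x_n ∈ X_m set δ_n = (x_n − μ_m)ᵀΣ_m⁻¹(x_n − μ_m) and w_n(ν) = (ν + r)/(ν + δ_n); set q = r(r+3)/2. Define BIC_{t_ν}(M_l) = ∑_{m=1}^l N_m log N_m − ∑_{m=1}^l (N_m/2) log det Σ_m + ∑_{m=1}^l N_m log[Γ((ν+r)/2)/(Γ(ν/2)(πν)^{r/2})] − (1/2)∑_{m=1}^l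 ∑_{x_n∈X_m} (ν + r) log(1 + δ_n/ν) − (q/2)∑_{m=1}^l log max(∑_{x_n∈X_m} w_n(ν)², N_m). Then, as ν → ∞ (ν ranging over positive reals), BIC_{t_ν}(M_l) converges to ∑_{m=1}^l N_m log N_m − ∑_{m=1}^l (N_m/2) log det Σ_m − (q/2)∑_{m=1}^l log N_m − (Nr/2)·log(2π) − (1/2)∑_{m=1}^l ∑_{x_n∈X_m} δ_n. If moreover each Σ_m equals the cluster sample scatter (1/N_m)∑_{x_n∈X_m}(x_n − μ_m)(x_n − μ_m)ᵀ, the last two terms equal the model-independent constant −(Nr/2)(log(2π) + 1), so the limit equals the Gaussian criterion BIC_N(M_l) = ∑_m N_m log N_m − ∑_m (N_m/2) log det Σ_m − (q/2)∑_m log N_m up to this additive constant. -/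
/-!
Log-convexity of `Γ`, applied on `[s, s + 1]` and on `[s + a, s + a + 1]`, gives Wendel's bounds
`Γ(s) s (s + a)^(a - 1) ≤ Γ(s + a) ≤ Γ(s) s^a` for `0 ≤ a ≤ 1`, and `Γ(s + 1) = s Γ(s)` extends
`Γ(s + a) ~ Γ(s) s^a` to every `a ≥ 0`. With `s = ν/2`, `a = r/2` the normalizing constant of the
`t_ν` density tends to `(2π)^(-r/2)`; moreover `(ν + r) log(1 + δ/ν) → δ` and every weight tends
to `1`, so each term of `BIC_{t_ν}` converges to its Gaussian counterpart. When `Σₘ` is the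
scatter matrix, `∑ₙ δₙ = tr(Σₘ⁻¹ ∑ₙ (xₙ - μₘ)(xₙ - μₘ)ᵀ) = Nₘ r`.
-/

open Filter Matrix Real Topology

lemma log_Gamma_add_le_of_le_one {s a : ℝ} (hs : 0 < s) (ha₀ : 0 ≤ a) (ha₁ : a ≤ 1) :
    log (Gamma (s + a)) ≤ log (Gamma s) + a * log s := by
  have h := convexOn_log_Gamma.2 (Set.mem_Ioi.2 hs) (Set.mem_Ioi.2 (by linarith : 0 < s + 1))
    (sub_nonneg.2 ha₁) ha₀ (sub_add_cancel 1 a)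
  simp only [smul_eq_mul, Function.comp_apply] at h
  rw [show (1 - a) * s + a * (s + 1) = s + a by ring, Gamma_add_one hs.ne',
    log_mul hs.ne' (Gamma_pos_of_pos hs).ne'] at h
  linarith

lemma log_Gamma_add_ge_of_le_one {s a : ℝ} (hs : 0 < s) (ha₀ : 0 ≤ a) (ha₁ : a ≤ 1) :
    log (Gamma s) + log s - (1 - a) * log (s + a) ≤ log (Gamma (s + a)) := by
  have hsa : 0 < s + a := by linarith
  have h := convexOn_log_Gamma.2 (Set.mem_Ioi.2 hsa) (Set.mem_Ioi.2 (by linarith : 0 < s + a + 1))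
    ha₀ (sub_nonneg.2 ha₁) (add_sub_cancel a 1)
  simp only [smul_eq_mul, Function.comp_apply] at h
  rw [show a * (s + a) + (1 - a) * (s + a + 1) = s + 1 by ring, Gamma_add_one hs.ne',
    Gamma_add_one hsa.ne', log_mul hs.ne' (Gamma_pos_of_pos hs).ne',
    log_mul hsa.ne' (Gamma_pos_of_pos hsa).ne'] at h
  linarith

lemma tendsto_log_Gamma_add_sub_log_Gamma_of_le_one {a : ℝ} (ha₀ : 0 ≤ a) (ha₁ : a ≤ 1) :
    Tendsto (fun s => log (Gamma (s + a)) - log (Gamma s) - a * log s) atTop (𝓝 0) := by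
  have hlow : Tendsto (fun s => -((1 - a) * (log (s + a) - log s))) atTop (𝓝 0) := by
    simpa using ((tendsto_log_comp_add_sub_log a).const_mul (1 - a)).neg
  refine tendsto_of_tendsto_of_tendsto_of_le_of_le' hlow tendsto_const_nhds ?_ ?_
  all_goals filter_upwards [eventually_gt_atTop 0] with s hs
  · linarith [log_Gamma_add_ge_of_le_one hs ha₀ ha₁]
  · linarith [log_Gamma_add_le_of_le_one hs ha₀ ha₁]

lemma tendsto_log_Gamma_add_sub_log_Gamma {a : ℝ} (ha : 0 ≤ a) :
    Tendsto (fun s => log (Gamma (s + a)) - log (Gamma s) - a * log s) atTop (𝓝 0) := by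
  obtain ⟨n, hn⟩ := exists_nat_ge a
  induction n generalizing a with
  | zero => exact tendsto_log_Gamma_add_sub_log_Gamma_of_le_one ha (hn.trans (by simp))
  | succ n ih =>
    rcases le_total a 1 with ha₁ | ha₁
    · exact tendsto_log_Gamma_add_sub_log_Gamma_of_le_one ha ha₁
    have h := (ih (sub_nonneg.2 ha₁) (by push_cast at hn; linarith)).add
      (tendsto_log_comp_add_sub_log (a - 1))
    rw [add_zero] at h
    refine h.congr' ?_
    filter_upwards [eventually_gt_atTop 1] with s hs
    have hsa : 0 < s + (a - 1) := by linarith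
    rw [show s + a = s + (a - 1) + 1 by ring, Gamma_add_one hsa.ne',
      log_mul hsa.ne' (Gamma_pos_of_pos hsa).ne']
    ring

lemma tendsto_log_studentT_normalizer {r : ℝ} (hr : 0 ≤ r) :
    Tendsto (fun ν => log (Gamma ((ν + r) / 2) / (Gamma (ν / 2) * (π * ν) ^ (r / 2))))
      atTop (𝓝 (-(r / 2) * log (2 * π))) := by
  have h := ((tendsto_log_Gamma_add_sub_log_Gamma (div_nonneg hr zero_le_two)).comp
    (tendsto_id.atTop_div_const two_pos)).sub_const ((r / 2) * log (2 * π))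
  rw [zero_sub, ← neg_mul] at h
  refine h.congr' ?_
  filter_upwards [eventually_gt_atTop 0] with ν hν
  have hs : 0 < ν / 2 := by positivity
  have hsr : 0 < (ν + r) / 2 := by positivity
  rw [Function.comp_apply, id, show ν / 2 + r / 2 = (ν + r) / 2 by ring,
    show π * ν = 2 * π * (ν / 2) by ring, log_div (Gamma_pos_of_pos hsr).ne' (by positivity),
    log_mul (Gamma_pos_of_pos hs).ne' (by positivity), log_rpow (by positivity),
    log_mul (by positivity) hs.ne']
  ring

lemma tendsto_add_mul_log_one_add_div (a c : ℝ) :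
    Tendsto (fun ν => (ν + a) * log (1 + c / ν)) atTop (𝓝 c) := by
  have hlog : Tendsto (fun ν => log (1 + c / ν)) atTop (𝓝 0) := by
    have h : Tendsto (fun ν => 1 + c / ν) atTop (𝓝 1) := by
      simpa using tendsto_const_nhds.add (tendsto_const_nhds.div_atTop (tendsto_id (α := ℝ)))
    rw [← log_one]
    exact (continuousAt_log one_ne_zero).tendsto.comp h
  simpa [add_mul] using (tendsto_mul_log_one_add_div_atTop c).add (hlog.const_mul a)

lemma tendsto_add_div_add (a b : ℝ) : Tendsto (fun s => (s + a) / (s + b)) atTop (𝓝 1) := by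
  have h := (tendsto_const_nhds (x := a - b)).div_atTop
    (tendsto_atTop_add_const_right _ b tendsto_id)
  rw [← add_zero 1]
  refine (tendsto_const_nhds.add h).congr' ?_
  filter_upwards [eventually_gt_atTop (-b)] with s hs
  field_simp [show s + b ≠ 0 by linarith]
  simp only [id]
  ring

lemma tendsto_log_max_sum_sq_add_div_add {k : ℕ} (hk : k ≠ 0) (a : ℝ) (b : Fin k → ℝ) :
    Tendsto (fun s => log (max (∑ i, ((s + a) / (s + b i)) ^ 2) (k : ℝ))) atTop
      (𝓝 (log k)) := by
  have hsum : Tendsto (fun s => ∑ i, ((s + a) / (s + b i)) ^ 2) atTop (𝓝 (k : ℝ)) := by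
    simpa using tendsto_finsetSum Finset.univ fun i _ => (tendsto_add_div_add a (b i)).pow 2
  have h := hsum.max (tendsto_const_nhds (x := (k : ℝ)))
  rw [max_self] at h
  exact (continuousAt_log (by exact_mod_cast hk)).tendsto.comp h

lemma sum_dotProduct_inv_mulVec_of_eq_scatter {K ι n : Type*} [Field K] [Fintype ι]
    [Fintype n] [DecidableEq n] (S : Matrix n n K) (hS : IsUnit S.det) (v : ι → n → K)
    (hι : (Fintype.card ι : K) ≠ 0)
    (hscatter : S = (Fintype.card ι : K)⁻¹ • ∑ i, vecMulVec (v i) (v i)) :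
    ∑ i, v i ⬝ᵥ (S⁻¹ *ᵥ v i) = Fintype.card ι * Fintype.card n := by
  have hsum : ∑ i, vecMulVec (v i) (v i) = (Fintype.card ι : K) • S := by
    rw [hscatter, smul_smul, mul_inv_cancel₀ hι, one_smul]
  calc ∑ i, v i ⬝ᵥ (S⁻¹ *ᵥ v i) = (S⁻¹ * ∑ i, vecMulVec (v i) (v i)).trace := by
        simp only [Matrix.mul_sum, trace_sum, mul_vecMulVec, trace_vecMulVec, dotProduct_comm]
    _ = Fintype.card ι * Fintype.card n := by
        rw [hsum, Matrix.mul_smul, nonsing_inv_mul S hS, trace_smul, trace_one, smul_eq_mul]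

theorem BICt_tendsto_BICN_general
    (r l : ℕ)
    (Nm : Fin l → ℕ) (hNm : ∀ m, 1 ≤ Nm m)
    (x : (m : Fin l) → Fin (Nm m) → Fin r → ℝ)
    (μ : Fin l → Fin r → ℝ)
    (S : Fin l → Matrix (Fin r) (Fin r) ℝ) (hS : ∀ m, (S m).PosDef)
    (N : ℕ) (hN : N = ∑ m, Nm m)
    (q : ℝ)
    (δ : (m : Fin l) → Fin (Nm m) → ℝ)
    (hδ : ∀ m n, δ m n = (x m n - μ m) ⬝ᵥ ((S m)⁻¹ *ᵥ (x m n - μ m)))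
    (w : ℝ → (m : Fin l) → Fin (Nm m) → ℝ)
    (hw : ∀ ν m n, w ν m n = (ν + r) / (ν + δ m n)) :
    Tendsto (fun ν : ℝ =>
        (∑ m, (Nm m : ℝ) * Real.log (Nm m))
        - (∑ m, ((Nm m : ℝ) / 2) * Real.log (S m).det)
        + (∑ m, (Nm m : ℝ) *
            Real.log (Real.Gamma ((ν + r) / 2) /
              (Real.Gamma (ν / 2) * (Real.pi * ν) ^ ((r : ℝ) / 2))))
        - (1 / 2) * (∑ m, ∑ n, (ν + r) * Real.log (1 + δ m n / ν))
        - (q / 2) * (∑ m, Real.log (max (∑ n, (w ν m n) ^ 2) (Nm m : ℝ))))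
      atTop
      (nhds ((∑ m, (Nm m : ℝ) * Real.log (Nm m))
        - (∑ m, ((Nm m : ℝ) / 2) * Real.log (S m).det)
        - (q / 2) * (∑ m, Real.log (Nm m : ℝ))
        - ((N : ℝ) * r / 2) * Real.log (2 * Real.pi)
        - (1 / 2) * (∑ m, ∑ n, δ m n))) ∧
    ((∀ m, S m = ((Nm m : ℝ))⁻¹ •
          ∑ n, vecMulVec (x m n - μ m) (x m n - μ m)) →
      ((∑ m, (Nm m : ℝ) * Real.log (Nm m))
        - (∑ m, ((Nm m : ℝ) / 2) * Real.log (S m).det)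
        - (q / 2) * (∑ m, Real.log (Nm m : ℝ))
        - ((N : ℝ) * r / 2) * Real.log (2 * Real.pi)
        - (1 / 2) * (∑ m, ∑ n, δ m n))
      = ((∑ m, (Nm m : ℝ) * Real.log (Nm m))
        - (∑ m, ((Nm m : ℝ) / 2) * Real.log (S m).det)
        - (q / 2) * (∑ m, Real.log (Nm m : ℝ)))
        - ((N : ℝ) * r / 2) * (Real.log (2 * Real.pi) + 1)) := by
  have hNcast : (N : ℝ) = ∑ m, (Nm m : ℝ) := by rw [hN, Nat.cast_sum]
  refine ⟨?_, fun hscatter => ?_⟩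
  · have hnormalizer := tendsto_finsetSum Finset.univ fun m _ =>
      (tendsto_log_studentT_normalizer (Nat.cast_nonneg r)).const_mul (Nm m : ℝ)
    have hfidelity := tendsto_finsetSum Finset.univ fun m _ => tendsto_finsetSum Finset.univ
      fun n _ => tendsto_add_mul_log_one_add_div (r : ℝ) (δ m n)
    have hpenalty := tendsto_finsetSum Finset.univ fun m _ =>
      tendsto_log_max_sum_sq_add_div_add (Nat.one_le_iff_ne_zero.1 (hNm m)) (r : ℝ) (δ m)
    simp only [hw]
    convert ((tendsto_const_nhds.add hnormalizer).sub (hfidelity.const_mul (1 / 2))).sub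
      (hpenalty.const_mul (q / 2)) using 2
    rw [← Finset.sum_mul, ← hNcast]
    ring
  · have hδsum : ∀ m, ∑ n, δ m n = Nm m * r := fun m => by
      simpa [hδ] using sum_dotProduct_inv_mulVec_of_eq_scatter (S m) (hS m).det_pos.ne'.isUnit
        (fun n => x m n - μ m) (by simpa using Nat.one_le_iff_ne_zero.1 (hNm m))
        (by simpa using hscatter m)
    rw [Finset.sum_congr rfl fun m _ => hδsum m, ← Finset.sum_mul, ← hNcast]
    ring

/-- as the degree of freedom `ν → ∞`, the robust criterion
`BIC_{t_ν}(M_l)` converges to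
`∑ₘ Nₘ log Nₘ − ∑ₘ (Nₘ/2) log det Σₘ − (q/2)∑ₘ log Nₘ − (Nr/2)·log(2π) − (1/2)∑ₘ∑ₙ δₙ`;
moreover, if each `Σₘ` is the cluster sample scatter, the last two terms equal the
model-independent constant `−(Nr/2)(log(2π)+1)`, so the limit equals the Gaussian
criterion `BIC_N(M_l)` up to this additive constant. -/
theorem BICt_tendsto_BICN
    (r l : ℕ) (hr : 1 ≤ r) (hl : 1 ≤ l)
    (Nm : Fin l → ℕ) (hNm : ∀ m, 1 ≤ Nm m)
    (x : (m : Fin l) → Fin (Nm m) → Fin r → ℝ)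
    (μ : Fin l → Fin r → ℝ)
    (S : Fin l → Matrix (Fin r) (Fin r) ℝ) (hS : ∀ m, (S m).PosDef)
    (N : ℕ) (hN : N = ∑ m, Nm m)
    (q : ℝ) (hq : q = (r : ℝ) * ((r : ℝ) + 3) / 2)
    (δ : (m : Fin l) → Fin (Nm m) → ℝ)
    (hδ : ∀ m n, δ m n = (x m n - μ m) ⬝ᵥ ((S m)⁻¹ *ᵥ (x m n - μ m)))
    (w : ℝ → (m : Fin l) → Fin (Nm m) → ℝ)
    (hw : ∀ ν m n, w ν m n = (ν + r) / (ν + δ m n)) :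
    Tendsto (fun ν : ℝ =>
        (∑ m, (Nm m : ℝ) * Real.log (Nm m))
        - (∑ m, ((Nm m : ℝ) / 2) * Real.log (S m).det)
        + (∑ m, (Nm m : ℝ) *
            Real.log (Real.Gamma ((ν + r) / 2) /
              (Real.Gamma (ν / 2) * (Real.pi * ν) ^ ((r : ℝ) / 2))))
        - (1 / 2) * (∑ m, ∑ n, (ν + r) * Real.log (1 + δ m n / ν))
        - (q / 2) * (∑ m, Real.log (max (∑ n, (w ν m n) ^ 2) (Nm m : ℝ))))
      atTop
      (nhds ((∑ m, (Nm m : ℝ) * Real.log (Nm m))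
        - (∑ m, ((Nm m : ℝ) / 2) * Real.log (S m).det)
        - (q / 2) * (∑ m, Real.log (Nm m : ℝ))
        - ((N : ℝ) * r / 2) * Real.log (2 * Real.pi)
        - (1 / 2) * (∑ m, ∑ n, δ m n))) ∧
    ((∀ m, S m = ((Nm m : ℝ))⁻¹ •
          ∑ n, vecMulVec (x m n - μ m) (x m n - μ m)) →
      ((∑ m, (Nm m : ℝ) * Real.log (Nm m))
        - (∑ m, ((Nm m : ℝ) / 2) * Real.log (S m).det)
        - (q / 2) * (∑ m, Real.log (Nm m : ℝ))
        - ((N : ℝ) * r / 2) * Real.log (2 * Real.pi)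
        - (1 / 2) * (∑ m, ∑ n, δ m n))
      = ((∑ m, (Nm m : ℝ) * Real.log (Nm m))
        - (∑ m, ((Nm m : ℝ) / 2) * Real.log (S m).det)
        - (q / 2) * (∑ m, Real.log (Nm m : ℝ)))
        - ((N : ℝ) * r / 2) * (Real.log (2 * Real.pi) + 1)) :=
  BICt_tendsto_BICN_general r l Nm hNm x μ S hS N hN q δ hδ w hw
end
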